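/- If an infinite word x contains only finitely many abelian unbordered factors, then x has bounded abelian complexity, i.e., there exists a constant N such that for every n ≥ 1 the factors of x of length n fall into at most N abelian equivalence classes. -/

import Mathlib

/-- The factor of the infinite word `x` of length `n` starting at position `i`. -/
def factorW {d : ℕ} (x : ℕ → Fin d) (i n : ℕ) : List (Fin d) :=
  (List.range n).map (fun j => x (i + j))

/-- The abelian complexity of `x` at `n`: the number of distinct Parikh vectors
of factors of `x` of length `n`. -/
noncomputable def abComplexity {d : ℕ} (x : ℕ → Fin d) (n : ℕ) : ℕ :=
  Set.ncard {p : Fin d → ℕ | ∃ i, ∀ a, (factorW x i n).count a = p a}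

/-- `v` is a (finite) factor of the infinite word `x`. -/
def isFactorOf {d : ℕ} (v : List (Fin d)) (x : ℕ → Fin d) : Prop :=
  ∃ i, v = factorW x i v.length

/-- `w` has an abelian border: a nonempty proper prefix abelian equivalent to the
suffix of the same length. -/
def AbBordered {d : ℕ} (w : List (Fin d)) : Prop :=
  ∃ ℓ, 0 < ℓ ∧ ℓ < w.length ∧
    ∀ a, (w.take ℓ).count a = (w.drop (w.length - ℓ)).count a


/-!
Let `K` exceed the length of every abelian unbordered factor, so that every factor of length at
least `K` has an abelian border. Then any two factors of the same length `n` differ by less than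
`K` in each letter count. Take the factor spanning both windows: it has an abelian border of some
length `ℓ`. Cancelling the two border blocks, which have the same Parikh vector, reduces the
comparison of the two windows to a comparison of two windows of length `|n - ℓ|` spanning a
strictly shorter factor, and the claim follows by induction on the spanning length; for `n < K`
it is trivial. Hence all Parikh vectors of length `n` lie in a box of side `2K` around that of
the prefix of length `n`.
-/

open Finset

theorem ncard_le_pow_of_abs_sub_lt {ι : Type*} [Fintype ι] (S : Set (ι → ℕ)) (c : ι → ℕ)
    (K : ℕ) (hS : ∀ p ∈ S, ∀ a, |(p a : ℤ) - c a| < K) :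
    S.ncard ≤ (2 * K) ^ Fintype.card ι := by
  classical
  let box := Fintype.piFinset fun a => Ico (c a - K) (c a + K)
  have hsub : S ⊆ box := by
    intro p hp
    rw [Finset.mem_coe, Fintype.mem_piFinset]
    intro a
    rw [Finset.mem_Ico]
    have := abs_sub_lt_iff.mp (hS p hp a)
    omega
  calc S.ncard ≤ box.card := by
        rw [← Set.ncard_coe_finset]; exact Set.ncard_le_ncard hsub (Finset.finite_toSet _)
    _ = ∏ a, (Ico (c a - K) (c a + K)).card := Fintype.card_piFinset _
    _ ≤ (2 * K) ^ Fintype.card ι := by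
        refine Finset.prod_le_pow_card _ _ _ fun a _ => ?_
        rw [Nat.card_Ico]; omega

section Factors

variable {d : ℕ} (x : ℕ → Fin d)

theorem factorW_length (i n : ℕ) : (factorW x i n).length = n := by
  simp [factorW]

theorem factorW_add (i m n : ℕ) :
    factorW x i (m + n) = factorW x i m ++ factorW x (i + m) n := by
  simp only [factorW, List.range_add, List.map_append, List.map_map, add_assoc]
  rfl

theorem factorW_take {k n : ℕ} (i : ℕ) (h : k ≤ n) :
    (factorW x i n).take k = factorW x i k := by
  rw [← Nat.add_sub_cancel' h, factorW_add]
  exact List.take_left' (factorW_length x i k)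

theorem factorW_drop {k n : ℕ} (i : ℕ) (h : k ≤ n) :
    (factorW x i n).drop k = factorW x (i + k) (n - k) := by
  conv_lhs => rw [← Nat.add_sub_cancel' h, factorW_add]
  exact List.drop_left' (factorW_length x i k)

theorem not_abBordered_factorW_zero (i : ℕ) : ¬ AbBordered (factorW x i 0) := by
  rintro ⟨ℓ, hℓ, hℓn, -⟩
  rw [factorW_length] at hℓn
  omega

def factorCount (a : Fin d) (i n : ℕ) : ℕ := (factorW x i n).count a

theorem factorCount_add (a : Fin d) (i m n : ℕ) :
    factorCount x a i (m + n) = factorCount x a i m + factorCount x a (i + m) n := by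
  rw [factorCount, factorW_add, List.count_append]
  rfl

theorem factorCount_le (a : Fin d) (i n : ℕ) : factorCount x a i n ≤ n :=
  (List.count_le_length).trans (factorW_length x i n).le

theorem AbBordered.exists_factorCount_eq {i n : ℕ} (h : AbBordered (factorW x i n)) :
    ∃ ℓ, 0 < ℓ ∧ ℓ < n ∧ ∀ a, factorCount x a i ℓ = factorCount x a (i + (n - ℓ)) ℓ := by
  obtain ⟨ℓ, hℓ, hℓn, hcount⟩ := h
  rw [factorW_length] at hℓn hcount
  refine ⟨ℓ, hℓ, hℓn, fun a => ?_⟩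
  have := hcount a
  rwa [factorW_take x i hℓn.le, factorW_drop x i (Nat.sub_le n ℓ),
    Nat.sub_sub_self hℓn.le] at this

theorem exists_forall_abBordered_factorW
    (h : {v : List (Fin d) | isFactorOf v x ∧ ¬ AbBordered v}.Finite) :
    ∃ K, ∀ i n, K ≤ n → AbBordered (factorW x i n) := by
  obtain ⟨B, hB⟩ := (h.image List.length).bddAbove
  refine ⟨B + 1, fun i n hn => ?_⟩
  by_contra hnb
  have hfac : isFactorOf (factorW x i n) x := ⟨i, by rw [factorW_length]⟩
  have := hB ⟨_, ⟨hfac, hnb⟩, rfl⟩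
  rw [factorW_length] at this
  omega

theorem factorCount_sub_eq_of_prefix_eq_suffix {a : Fin d} {u v n ℓ : ℕ} (hℓn : ℓ ≤ n)
    (hb : factorCount x a u ℓ = factorCount x a (v + (n - ℓ)) ℓ) :
    (factorCount x a u n : ℤ) - factorCount x a v n =
      factorCount x a (u + ℓ) (n - ℓ) - factorCount x a v (n - ℓ) := by
  have hu := factorCount_add x a u ℓ (n - ℓ)
  have hv := factorCount_add x a v (n - ℓ) ℓ
  rw [Nat.add_sub_cancel' hℓn] at hu
  rw [Nat.sub_add_cancel hℓn] at hv
  omega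

theorem factorCount_sub_eq_of_extension_eq {a : Fin d} {u w n ℓ : ℕ} (hnℓ : n ≤ ℓ)
    (hb : factorCount x a u ℓ = factorCount x a w ℓ) :
    (factorCount x a u n : ℤ) - factorCount x a (w + (ℓ - n)) n =
      factorCount x a w (ℓ - n) - factorCount x a (u + n) (ℓ - n) := by
  have hu := factorCount_add x a u n (ℓ - n)
  have hw := factorCount_add x a w (ℓ - n) n
  rw [Nat.add_sub_cancel' hnℓ] at hu
  rw [Nat.sub_add_cancel hnℓ] at hw
  omega

theorem abs_sub_factorCount_lt {K : ℕ} (hK : ∀ i n, K ≤ n → AbBordered (factorW x i n))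
    (a : Fin d) (u v n : ℕ) :
    |(factorCount x a u n : ℤ) - factorCount x a v n| < K := by
  have hK0 : 0 < K := Nat.pos_of_ne_zero fun h0 =>
    not_abBordered_factorW_zero x 0 (hK 0 0 h0.le)
  induction hs : (u - v) + (v - u) + n using Nat.strong_induction_on generalizing u v n with
  | _ s ih =>
  replace ih : ∀ u' v' n', (u' - v') + (v' - u') + n' < s →
      |(factorCount x a u' n' : ℤ) - factorCount x a v' n'| < K :=
    fun u' v' n' hlt => ih _ hlt u' v' n' rfl
  wlog huv : u ≤ v generalizing u v
  · rw [abs_sub_comm]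
    exact this v u (by omega) (by omega)
  obtain rfl | huv := huv.eq_or_lt
  · simpa using hK0
  rcases lt_or_ge n K with hn | hn
  · have hu := factorCount_le x a u n
    have hv := factorCount_le x a v n
    rw [abs_sub_lt_iff]
    omega
  -- the factor from `u` to `v + n` spans both windows
  obtain ⟨ℓ, hℓ, hℓs, hborder⟩ :=
    AbBordered.exists_factorCount_eq x (hK u (v - u + n) (by omega))
  rcases le_or_gt ℓ n with hℓn | hnℓ
  · have hb := hborder a
    rw [show u + (v - u + n - ℓ) = v + (n - ℓ) by omega] at hb
    rw [factorCount_sub_eq_of_prefix_eq_suffix x hℓn hb]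
    exact ih _ _ _ (by omega)
  · obtain ⟨w, rfl⟩ : ∃ w, v = w + (ℓ - n) := ⟨u + (v - u + n - ℓ), by omega⟩
    have hb := hborder a
    rw [show u + (w + (ℓ - n) - u + n - ℓ) = w by omega] at hb
    rw [factorCount_sub_eq_of_extension_eq x hnℓ.le hb, abs_sub_comm]
    exact ih _ _ _ (by omega)

end Factors

/-- If an infinite word has only finitely many abelian unbordered factors, then it
has bounded abelian complexity. -/
theorem stmt12 {d : ℕ} (x : ℕ → Fin d)
    (h : {v : List (Fin d) | isFactorOf v x ∧ ¬ AbBordered v}.Finite) :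
    ∃ N : ℕ, ∀ n : ℕ, 1 ≤ n → abComplexity x n ≤ N := by
  obtain ⟨K, hK⟩ := exists_forall_abBordered_factorW x h
  refine ⟨(2 * K) ^ d, fun n _ => ?_⟩
  have hbox := ncard_le_pow_of_abs_sub_lt
    {p : Fin d → ℕ | ∃ i, ∀ a, (factorW x i n).count a = p a}
    (fun a => factorCount x a 0 n) K (by
      rintro p ⟨i, hi⟩ a
      rw [← hi]
      exact abs_sub_factorCount_lt x hK a i 0 n)
  rwa [Fintype.card_fin] at hbox
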